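/- Let π be a partition of a finite set S into blocks {B_i, i∈I}, and J ⊆ I with |J| ≥ 2. The transition rate of the coalescent Π_{S,p} from π to the partition π^{⊕J} obtained by merging the blocks indexed by J equals ∑_{H⊆J} (-1)^{|H|} G_p(|B_{J∖H}|/|S|), where B_K = ∪_{j∈K} B_j and G_p is the generating function of p. -/

import Mathlib

/-!
Grouping tuples by their length `n`, the tuples contained in a set `A` of size `a` carry total
weight `p n (a/|S|)^n`, so their measure is `G_p(a/|S|)`. For disjoint blocks, a tuple contained in
`B_J` lies in `B_{J∖H}` iff it misses every block of `H`; summing `(-1)^|H|` over these `H` gives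
the indicator that it meets every block of `J` (inclusion-exclusion). Summing this identity over
all tuples yields the formula; as `J ≠ ∅`, such tuples are automatically nonempty.
-/

noncomputable def pgf (p : ℕ → ℝ) (s : ℝ) : ℝ := ∑' k : ℕ, p k * s ^ k

/-- Weight of a tuple `w` over a finite type `α` under the sampling measure `μ_{S,p}`:
`μ({w}) = p(ℓ(w)) / |S|^{ℓ(w)}`. -/
noncomputable def tupleWeight (α : Type*) [Fintype α] (p : ℕ → ℝ) (w : List α) : ℝ :=
  p w.length / (Fintype.card α : ℝ) ^ w.length

open Finset

namespace List

variable {α : Type*} [Fintype α]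

theorem summable_of_nonneg_of_summable_sum_ofFn {f : List α → ℝ} (hf : ∀ w, 0 ≤ f w)
    (h : Summable fun n => ∑ g : Fin n → α, f (ofFn g)) : Summable f := by
  rw [← equivSigmaTuple.symm.summable_iff]
  exact (summable_sigma_of_nonneg fun _ => hf _).2
    ⟨fun _ => .of_finite, by simpa [tsum_fintype] using h⟩

theorem tsum_eq_tsum_sum_ofFn {f : List α → ℝ} (hf : Summable f) :
    ∑' w, f w = ∑' n, ∑ g : Fin n → α, f (ofFn g) := by
  have hf' : Summable fun c => f (equivSigmaTuple.symm c) :=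
    equivSigmaTuple.symm.summable_iff.2 hf
  rw [← equivSigmaTuple.symm.tsum_eq, hf'.tsum_sigma' fun _ => .of_finite]
  simp [tsum_fintype, equivSigmaTuple]

end List

section TupleWeight

variable {α : Type*} [Fintype α] [DecidableEq α]

theorem sum_ofFn_tupleWeight_of_subset (p : ℕ → ℝ) (A : Finset α) (n : ℕ) :
    ∑ g : Fin n → α, (if ∀ x ∈ List.ofFn g, x ∈ A then tupleWeight α p (List.ofFn g) else 0) =
      p n * (#A / Fintype.card α : ℝ) ^ n := by
  simp only [List.forall_mem_ofFn_iff, tupleWeight, List.length_ofFn]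
  have hcard : #{g : Fin n → α | ∀ i, g i ∈ A} = #A ^ n := by
    rw [← Fintype.card_piFinset_const]
    congr 1
    ext
    simp [Fintype.mem_piFinset]
  rw [← sum_filter, sum_const, nsmul_eq_mul, div_pow, hcard]
  push_cast
  ring

theorem abs_ite_tupleWeight (p : ℕ → ℝ) (A : Finset α) (w : List α) :
    |if ∀ x ∈ w, x ∈ A then tupleWeight α p w else 0| =
      if ∀ x ∈ w, x ∈ A then tupleWeight α (fun k => |p k|) w else 0 := by
  split_ifs <;> simp [tupleWeight, abs_div]

theorem summable_ite_tupleWeight {p : ℕ → ℝ} (hp : Summable p) (A : Finset α) :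
    Summable fun w : List α => if ∀ x ∈ w, x ∈ A then tupleWeight α p w else 0 := by
  refine .of_abs ?_
  simp only [abs_ite_tupleWeight]
  refine List.summable_of_nonneg_of_summable_sum_ofFn (fun w => ?_) ?_
  · unfold tupleWeight
    split_ifs <;> positivity
  simp only [sum_ofFn_tupleWeight_of_subset]
  have hr : (#A / Fintype.card α : ℝ) ≤ 1 :=
    div_le_one_of_le₀ (mod_cast card_le_univ A) (by positivity)
  refine hp.abs.of_nonneg_of_le (fun n => by positivity) fun n => ?_
  exact mul_le_of_le_one_right (abs_nonneg _) (pow_le_one₀ (by positivity) hr)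

theorem hasSum_ite_tupleWeight {p : ℕ → ℝ} (hp : Summable p) (A : Finset α) :
    HasSum (fun w : List α => if ∀ x ∈ w, x ∈ A then tupleWeight α p w else 0)
      (pgf p (#A / Fintype.card α)) := by
  have hs := summable_ite_tupleWeight hp A
  rw [hs.hasSum_iff, List.tsum_eq_tsum_sum_ofFn hs]
  simp only [sum_ofFn_tupleWeight_of_subset]
  rfl

theorem ite_tupleWeight_eq_sum_powerset {ι : Type*} [DecidableEq ι] (p : ℕ → ℝ)
    {B : ι → Finset α} (hB : ∀ i j, i ≠ j → Disjoint (B i) (B j)) (J : Finset ι) (w : List α) :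
    (if (∀ x ∈ w, x ∈ J.biUnion B) ∧ ∀ j ∈ J, ∃ x ∈ w, x ∈ B j then tupleWeight α p w else 0) =
      ∑ H ∈ J.powerset, (-1 : ℝ) ^ #H *
        if ∀ x ∈ w, x ∈ (J \ H).biUnion B then tupleWeight α p w else 0 := by
  by_cases hwJ : ∀ x ∈ w, x ∈ J.biUnion B
  swap
  · refine (if_neg fun h => hwJ h.1).trans (sum_eq_zero fun H _ => ?_).symm
    refine mul_eq_zero_of_right _ (if_neg fun h => hwJ fun x hx => ?_)
    exact biUnion_subset_biUnion_of_subset_left B sdiff_subset (h x hx)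
  set T := {j ∈ J | ∀ x ∈ w, x ∉ B j}
  have hT : {H ∈ J.powerset | ∀ x ∈ w, x ∈ (J \ H).biUnion B} = T.powerset := by
    ext H
    simp only [mem_filter, mem_powerset, mem_biUnion, mem_sdiff, T, subset_iff]
    constructor
    · rintro ⟨hHJ, hcov⟩ j hj
      refine ⟨hHJ hj, fun x hx hxj => ?_⟩
      obtain ⟨i, ⟨-, hiH⟩, hxi⟩ := hcov x hx
      exact disjoint_left.1 (hB j i (ne_of_mem_of_not_mem hj hiH)) hxj hxi
    · intro hHT
      refine ⟨fun j hj => (hHT hj).1, fun x hx => ?_⟩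
      obtain ⟨i, hiJ, hxi⟩ := mem_biUnion.1 (hwJ x hx)
      exact ⟨i, ⟨hiJ, fun hiH => (hHT hiH).2 x hx hxi⟩, hxi⟩
  have hT_empty : T = ∅ ↔ ∀ j ∈ J, ∃ x ∈ w, x ∈ B j := by
    simp [T, filter_eq_empty_iff]
  have halt : ∑ H ∈ T.powerset, (-1 : ℝ) ^ #H = if T = ∅ then 1 else 0 := by
    exact_mod_cast sum_powerset_neg_one_pow_card
  simp only [mul_ite, mul_zero]
  rw [← sum_filter, hT, ← sum_mul, halt]
  simp only [ite_mul, one_mul, zero_mul, hT_empty]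
  exact if_congr (and_iff_right hwJ) rfl rfl

end TupleWeight

theorem stmt13_general {α I : Type*} [Fintype α] [DecidableEq α] [DecidableEq I]
    (p : ℕ → ℝ) (hsum : ∑' k : ℕ, p k = 1)
    (B : I → Finset α)
    (hdisj : ∀ i j, i ≠ j → Disjoint (B i) (B j))
    (J : Finset I) (hJ : 2 ≤ J.card) :
    (∑' w : List α,
        (if w ≠ [] ∧ (∀ x ∈ w, x ∈ J.biUnion B) ∧ (∀ j ∈ J, ∃ x ∈ w, x ∈ B j)
          then tupleWeight α p w else 0)) =
      ∑ H ∈ J.powerset, (-1 : ℝ) ^ H.card *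
        pgf p ((((J \ H).biUnion B).card : ℝ) / (Fintype.card α : ℝ)) := by
  have hp : Summable p := by
    by_contra h
    simp [tsum_eq_zero_of_not_summable h] at hsum
  obtain ⟨j₀, hj₀⟩ : J.Nonempty := card_pos.1 (by omega)
  refine HasSum.tsum_eq <|
    (hasSum_sum fun H _ => (hasSum_ite_tupleWeight hp _).mul_left _).congr_fun fun w => ?_
  refine (if_congr (and_iff_right_of_imp fun h => ?_) rfl rfl).trans
    (ite_tupleWeight_eq_sum_powerset p hdisj J w)
  rintro rfl
  simpa using h.2 j₀ hj₀

/-- transition rate of the coalescent `Π_{S,p}` from `π` to `π^{⊕J}`: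
the `μ_{S,p}`-measure of tuples contained in `B_J` meeting every block `B_j`, `j ∈ J`,
equals `∑_{H⊆J} (-1)^{|H|} G_p(|B_{J∖H}|/|S|)`. -/
theorem stmt13 {α I : Type*} [Fintype α] [Nonempty α] [DecidableEq α] [DecidableEq I]
    (p : ℕ → ℝ) (hz : p 0 = 0) (hnn : ∀ k, 0 ≤ p k) (hsum : ∑' k : ℕ, p k = 1)
    (B : I → Finset α) (hne : ∀ i, (B i).Nonempty)
    (hdisj : ∀ i j, i ≠ j → Disjoint (B i) (B j))
    (J : Finset I) (hJ : 2 ≤ J.card) :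
    (∑' w : List α,
        (if w ≠ [] ∧ (∀ x ∈ w, x ∈ J.biUnion B) ∧ (∀ j ∈ J, ∃ x ∈ w, x ∈ B j)
          then tupleWeight α p w else 0)) =
      ∑ H ∈ J.powerset, (-1 : ℝ) ^ H.card *
        pgf p ((((J \ H).biUnion B).card : ℝ) / (Fintype.card α : ℝ)) :=
  stmt13_general p hsum B hdisj J hJ
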